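/- arXiv:1907.01834 — 2 statements merged into one kernel-verified Lean document; each statement's English description precedes it below -/
import Mathlib

section
/- Let $H \geq 1$ and let $k$ be an even non-negative integer. Then $$\frac{1}{H^{k/2}} \sum_{\substack{(k_1,\dots,k_H)\in\mathbb{Z}_{\geq 0}^H \\ k_1+\dots+k_H=k \\ \text{all } k_i \text{ even}}} \binom{k}{k_1,\dots,k_H} \prod_{i=1}^H \binom{k_i}{k_i/2} \cdot 2^{-|\{i : k_i \geq 1\}|} \leq \frac{k!}{(k/2)!}.$$ -/
/-!
Write the even tuple as `2g` with `∑ gᵢ = n = k/2`. Then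
`multinomial(2g) · ∏ binom(2gᵢ, gᵢ) = k! / ∏ (gᵢ!)² = (k!/n!) · multinomial(g) / ∏ gᵢ!`,
which is at most `(k!/n!) · multinomial(g)`, and the multinomial theorem gives
`∑_{|g| = n} multinomial(g) = Hⁿ`. The factor `2^{-|{i : kᵢ ≥ 1}|}` is simply bounded by `1`.
-/

open Finset
open scoped Nat

namespace Nat

variable {ι : Type*} (s : Finset ι) (g : ι → ℕ)

theorem factorial_two_mul_eq_centralBinom_mul (n : ℕ) : (2 * n)! = n.centralBinom * n ! * n ! := by
  rw [centralBinom_eq_two_mul_choose, ← choose_mul_factorial_mul_factorial (by omega : n ≤ 2 * n),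
    two_mul, Nat.add_sub_cancel]

theorem multinomial_two_mul_mul_prod_centralBinom_mul :
    multinomial s (fun i => 2 * g i) * (∏ i ∈ s, (g i).centralBinom) * (∏ i ∈ s, (g i)!) *
        (∑ i ∈ s, g i)! = (2 * ∑ i ∈ s, g i)! * multinomial s g := by
  rw [← multinomial_spec s g, mul_sum, ← multinomial_spec s (fun i => 2 * g i)]
  simp only [factorial_two_mul_eq_centralBinom_mul, prod_mul_distrib]
  ring

theorem multinomial_two_mul_mul_prod_centralBinom_le :
    (multinomial s (fun i => 2 * g i) : ℝ) * ∏ i ∈ s, ((g i).centralBinom : ℝ) ≤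
      (2 * ∑ i ∈ s, g i)! / (∑ i ∈ s, g i)! * multinomial s g := by
  rw [div_mul_eq_mul_div, le_div_iff₀ (by positivity)]
  have hprod : 0 < ∏ i ∈ s, (g i)! := prod_pos fun i _ => factorial_pos (g i)
  exact_mod_cast (Nat.le_mul_of_pos_right _ hprod).trans_eq <| by
    rw [← multinomial_two_mul_mul_prod_centralBinom_mul]; ring

end Nat

namespace Finset.Nat

theorem filter_even_antidiagonalTuple (H n : ℕ) :
    (antidiagonalTuple H (2 * n)).filter (fun f => ∀ i, Even (f i)) =
      (antidiagonalTuple H n).map ⟨(2 • ·), nsmul_right_injective two_ne_zero⟩ := by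
  simp_rw [even_iff_two_dvd, ← piAntidiag_univ_fin_eq_antidiagonalTuple,
    map_nsmul_piAntidiag_univ _ two_ne_zero]
  ext; simp

theorem sum_multinomial_antidiagonalTuple (H n : ℕ) :
    ∑ f ∈ antidiagonalTuple H n, _root_.Nat.multinomial univ f = H ^ n := by
  simpa [piAntidiag_univ_fin_eq_antidiagonalTuple] using
    (sum_pow_eq_sum_piAntidiag (univ : Finset (Fin H)) (fun _ => (1 : ℕ)) n).symm

end Finset.Nat

theorem stmt_0_general (H k : ℕ) (hk : Even k) :
    (1 / (H : ℝ) ^ (k / 2)) *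
      ∑ f ∈ (Finset.Nat.antidiagonalTuple H k).filter (fun f => ∀ i, Even (f i)),
        ((Nat.multinomial Finset.univ f : ℝ) *
          (∏ i, ((f i).choose (f i / 2) : ℝ)) *
          (2 : ℝ) ^ (-((Finset.univ.filter fun i => 1 ≤ f i).card : ℤ)))
      ≤ (k.factorial : ℝ) / ((k / 2).factorial : ℝ) := by
  obtain ⟨n, rfl⟩ := hk.two_dvd
  rw [Nat.mul_div_cancel_left n two_pos, Nat.filter_even_antidiagonalTuple, sum_map]
  calc _ ≤ 1 / (H : ℝ) ^ n *
        ∑ g ∈ Nat.antidiagonalTuple H n, (2 * n)! / n ! * (Nat.multinomial univ g : ℝ) := by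
        refine mul_le_mul_of_nonneg_left (sum_le_sum fun g hg => ?_) (by positivity)
        rw [Nat.mem_antidiagonalTuple] at hg
        simp only [Function.Embedding.coeFn_mk, Pi.smul_apply, smul_eq_mul,
          Nat.mul_div_cancel_left _ two_pos, ← Nat.centralBinom_eq_two_mul_choose]
        refine (mul_le_of_le_one_right (by positivity) (zpow_le_one_of_nonpos₀ one_le_two
          (by simp))).trans ?_
        rw [← hg]
        exact Nat.multinomial_two_mul_mul_prod_centralBinom_le univ g
    _ = (2 * n)! / n ! * ((H : ℝ) ^ n / (H : ℝ) ^ n) := by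
        rw [← mul_sum, ← Nat.cast_sum, Nat.sum_multinomial_antidiagonalTuple]
        push_cast
        ring
    _ ≤ (2 * n)! / n ! := mul_le_of_le_one_right (by positivity) (div_self_le_one _)

theorem stmt_0 (H k : ℕ) (hH : 1 ≤ H) (hk : Even k) :
    (1 / (H : ℝ) ^ (k / 2)) *
      ∑ f ∈ (Finset.Nat.antidiagonalTuple H k).filter (fun f => ∀ i, Even (f i)),
        ((Nat.multinomial Finset.univ f : ℝ) *
          (∏ i, ((f i).choose (f i / 2) : ℝ)) *
          (2 : ℝ) ^ (-((Finset.univ.filter fun i => 1 ≤ f i).card : ℤ)))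
      ≤ (k.factorial : ℝ) / ((k / 2).factorial : ℝ) :=
  stmt_0_general H k hk
end

section
/- Let $k \geq 1$, let $p$ be a prime, and let $\ell_1,\dots,\ell_k$ be integers with $|\ell_i| < p$ for all $i$ and not all $\ell_i \equiv 0 \pmod p$. Let $\tau_1,\dots,\tau_k \in \mathbb{F}_p$ be pairwise distinct and let $w \not\equiv 0 \pmod p$. Then the number of tuples $(b_1,\dots,b_k) \in \{1,\dots,(p-1)/2\}^k$ such that the $b_i^2 - \tau_i$ are all equal mod $p$, $p \nmid b_i^2 - \tau_i$, and $\sum_{i=1}^k \ell_i \bar{b_i} \equiv w \pmod p$ is at most $k\,2^{k-1}$. -/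
open Finset MvPolynomial

namespace Stmt17

variable {F : Type*} [Field F] {k : ℕ}

noncomputable def sgn (b : Bool) : F := if b then 1 else -1

lemma sgn_ne_zero (b : Bool) : (sgn b : F) ≠ 0 := by
  cases b <;> simp [sgn]

lemma sgn_not (b : Bool) : (sgn (!b) : F) = - sgn b := by cases b <;> simp [sgn]

noncomputable def M : MvPolynomial (Fin k) F := ∏ j, X j

noncomputable def A (ℓ : Fin k → F) (ε : Fin k → Bool) : MvPolynomial (Fin k) F :=
  ∑ i, C (ℓ i * sgn (ε i)) * ∏ j ∈ univ.erase i, X j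

noncomputable def cc (w : F) (ε : Fin k → Bool) : F := -w

noncomputable def G (ℓ : Fin k → F) (w : F) (ε : Fin k → Bool) : MvPolynomial (Fin k) F :=
  A ℓ ε + C (cc w ε) * M

noncomputable def Q (ℓ : Fin k → F) (w : F) : MvPolynomial (Fin k) F :=
  ∏ ε : Fin k → Bool, G ℓ w ε

lemma Q_def (ℓ : Fin k → F) (w : F) : Q ℓ w = ∏ ε : Fin k → Bool, G ℓ w ε := rfl

lemma cc_ne_zero {w : F} (hw : w ≠ 0) (ε : Fin k → Bool) : cc w ε ≠ 0 :=
  neg_ne_zero.2 hw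

noncomputable def φ (i : Fin k) : MvPolynomial (Fin k) F →ₐ[F] MvPolynomial (Fin k) F :=
  MvPolynomial.aeval (fun j => if j = i then -X j else X j)

lemma φ_X (i j : Fin k) : φ (F := F) i (X j) = if j = i then -X j else X j := by
  simp [φ]

lemma φ_monomial (i : Fin k) (d : Fin k →₀ ℕ) (a : F) :
    φ i (monomial d a) = (-1 : F) ^ (d i) • monomial d a := by
  rw [φ, aeval_monomial]
  have h1 : (d.prod fun n e => (if n = i then -X n else X n : MvPolynomial (Fin k) F) ^ e)
      = ((-1 : F) ^ (d i)) • d.prod fun n e => (X n : MvPolynomial (Fin k) F) ^ e := by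
    rw [Finsupp.prod, Finsupp.prod]
    by_cases hi : i ∈ d.support
    · rw [← Finset.mul_prod_erase _ _ hi, ← Finset.mul_prod_erase _ _ hi]
      have hprod : (∏ x ∈ d.support.erase i,
          (if x = i then -X x else X x : MvPolynomial (Fin k) F) ^ d x)
          = ∏ x ∈ d.support.erase i, (X x : MvPolynomial (Fin k) F) ^ d x :=
        Finset.prod_congr rfl fun j hj => by rw [if_neg (Finset.ne_of_mem_erase hj)]
      rw [hprod, if_pos rfl, neg_pow, Algebra.smul_def, algebraMap_eq, map_pow, map_neg,
        map_one]
      ring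
    · have hd0 : d i = 0 := Finsupp.notMem_support_iff.1 hi
      rw [hd0, pow_zero, one_smul]
      exact Finset.prod_congr rfl fun j hj => by
        rw [if_neg (show ¬ j = i from fun h => hi (h ▸ hj))]
  rw [h1, monomial_eq]
  rw [mul_smul_comm]
  rfl

lemma coeff_φ (i : Fin k) (f : MvPolynomial (Fin k) F) (d : Fin k →₀ ℕ) :
    (φ i f).coeff d = (-1 : F) ^ (d i) * f.coeff d := by
  conv_lhs => rw [← f.support_sum_monomial_coeff, map_sum]
  rw [Finset.sum_congr rfl fun e _ => φ_monomial i e (f.coeff e)]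
  simp only [coeff_smul, MvPolynomial.coeff_sum, coeff_monomial, smul_eq_mul]
  rw [Finset.sum_eq_single d]
  · simp
  · intro e he hne
    rw [if_neg hne, mul_zero]
  · intro hd
    rw [MvPolynomial.notMem_support_iff.1 hd, if_pos rfl, mul_zero]



lemma φ_C (i : Fin k) (a : F) : φ i (C a) = C a := by
  simp [φ, algebraMap_eq]

lemma φ_prod_X (i : Fin k) (s : Finset (Fin k)) :
    φ (F := F) i (∏ j ∈ s, X j) = (if i ∈ s then -1 else 1) * ∏ j ∈ s, X j := by
  rw [map_prod]
  by_cases hi : i ∈ s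
  · rw [if_pos hi, ← Finset.mul_prod_erase _ _ hi, ← Finset.mul_prod_erase _ _ hi]
    have hprod : (∏ j ∈ s.erase i, φ (F := F) i (X j)) = ∏ j ∈ s.erase i, X j :=
      Finset.prod_congr rfl fun j hj => by
        rw [φ_X, if_neg (Finset.ne_of_mem_erase hj)]
    rw [hprod, φ_X, if_pos rfl]
    ring
  · rw [if_neg hi, one_mul]
    exact Finset.prod_congr rfl fun j hj => by
      rw [φ_X, if_neg (show ¬ j = i from fun h => hi (h ▸ hj))]

lemma φ_G (ℓ : Fin k → F) (w : F) (i : Fin k) (ε : Fin k → Bool) :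
    φ i (G ℓ w ε) = - G ℓ w (Function.update ε i (!ε i)) := by
  have h1 : ∀ i' : Fin k, φ (F := F) i (C (ℓ i' * sgn (ε i')) * ∏ j ∈ univ.erase i', X j)
      = - (C (ℓ i' * sgn (Function.update ε i (!ε i) i')) * ∏ j ∈ univ.erase i', X j) := by
    intro i'
    rw [map_mul, φ_C, φ_prod_X]
    by_cases h : i' = i
    · subst h
      rw [if_neg (notMem_erase _ _), Function.update_self, sgn_not, map_mul, map_mul,
        map_neg]
      ring
    · rw [if_pos (mem_erase.2 ⟨Ne.symm h, mem_univ _⟩),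
        Function.update_of_ne h]
      ring
  rw [G, A, M, map_add, map_sum, map_mul, φ_C, φ_prod_X, if_pos (mem_univ i),
    Finset.sum_congr rfl (fun i' _ => h1 i'), Finset.sum_neg_distrib, cc]
  simp only [G, A, M, cc]
  ring

def flipE (i : Fin k) : (Fin k → Bool) ≃ (Fin k → Bool) :=
  Function.Involutive.toPerm (fun ε => Function.update ε i (!ε i)) (by
    intro ε
    funext j
    by_cases h : j = i
    · subst h; simp
    · simp [Function.update_of_ne h])

lemma φ_Q (hk : 1 ≤ k) (ℓ : Fin k → F) (w : F) (i : Fin k) : φ i (Q ℓ w) = Q ℓ w := by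
  rw [Q_def, map_prod, Finset.prod_congr rfl (fun ε _ => φ_G ℓ w i ε)]
  have h1 : (∏ ε : Fin k → Bool, - G ℓ w (Function.update ε i (!ε i)))
      = ∏ ε : Fin k → Bool, - G ℓ w ε := (flipE i).prod_comp (fun ε => - G ℓ w ε)
  rw [h1]
  have h2 : (∏ ε : Fin k → Bool, - G ℓ w ε)
      = (-1 : MvPolynomial (Fin k) F) ^ (Fintype.card (Fin k → Bool)) * ∏ ε, G ℓ w ε := by
    calc (∏ ε : Fin k → Bool, - G ℓ w ε)
        = ∏ ε : Fin k → Bool, ((-1) * G ℓ w ε) :=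
          Finset.prod_congr rfl (fun _ _ => (neg_one_mul _).symm)
      _ = (∏ _ε : Fin k → Bool, (-1 : MvPolynomial (Fin k) F)) * ∏ ε, G ℓ w ε :=
          Finset.prod_mul_distrib
      _ = _ := by rw [Finset.prod_const, Finset.card_univ]
  rw [h2]
  have h3 : Even (Fintype.card (Fin k → Bool)) := by
    rw [Fintype.card_fun, Fintype.card_bool, Fintype.card_fin]
    exact (Nat.even_pow' (by omega)).2 even_two
  rw [h3.neg_one_pow, one_mul]

lemma even_exp (h2 : (2 : F) ≠ 0) (hk : 1 ≤ k) (ℓ : Fin k → F) (w : F)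
    (d : Fin k →₀ ℕ) (hd : d ∈ (Q ℓ w).support) (i : Fin k) : 2 ∣ d i := by
  by_contra hodd
  have h := coeff_φ i (Q ℓ w) d
  rw [φ_Q hk] at h
  have hneg : ((-1 : F)) ^ (d i) = -1 := Odd.neg_one_pow (Nat.odd_iff.2 (by omega))
  rw [hneg, neg_one_mul] at h
  have hcoeff : (Q ℓ w).coeff d ≠ 0 := MvPolynomial.mem_support_iff.1 hd
  have : (2 : F) * (Q ℓ w).coeff d = 0 := by linear_combination h
  rcases mul_eq_zero.1 this with h' | h'
  · exact h2 h'
  · exact hcoeff h'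

noncomputable def dstar (k : ℕ) : Fin k →₀ ℕ := Finsupp.equivFunOnFinite.symm (fun _ => 2 ^ k)

lemma dstar_apply (j : Fin k) : dstar k j = 2 ^ k := rfl

lemma M_pow (n : ℕ) (hn : n ≠ 0) :
    (M : MvPolynomial (Fin k) F) ^ n = monomial (Finsupp.equivFunOnFinite.symm fun _ => n) 1 := by
  set e : Fin k →₀ ℕ := Finsupp.equivFunOnFinite.symm fun _ => n with he
  have hs : e.support = univ := by
    apply Finset.eq_univ_of_forall
    intro j
    exact Finsupp.mem_support_iff.2 (by simpa [he] using hn)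
  rw [← prod_X_pow_eq_monomial, hs, M, ← Finset.prod_pow]
  exact Finset.prod_congr rfl fun x _ => rfl

lemma totalDegree_A (ℓ : Fin k → F) (ε : Fin k → Bool) : (A ℓ ε).totalDegree ≤ k - 1 := by
  refine totalDegree_finsetSum_le fun i _ => ?_
  refine (totalDegree_mul _ _).trans ?_
  rw [totalDegree_C, zero_add]
  refine (totalDegree_finset_prod _ _).trans ?_
  refine (Finset.sum_le_card_nsmul _ _ 1 fun j _ => by simp [totalDegree_X]).trans ?_
  simp [Finset.card_erase_of_mem, mul_comm]

lemma totalDegree_CM (w : F) (ε : Fin k → Bool) :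
    (C (cc w ε) * M : MvPolynomial (Fin k) F).totalDegree ≤ k := by
  refine (totalDegree_mul _ _).trans ?_
  rw [totalDegree_C, zero_add, M]
  refine (totalDegree_finset_prod _ _).trans ?_
  refine (Finset.sum_le_card_nsmul _ _ 1 fun j _ => by simp [totalDegree_X]).trans ?_
  simp [mul_comm]

lemma totalDegree_G (ℓ : Fin k → F) (w : F) (ε : Fin k → Bool) :
    (G ℓ w ε).totalDegree ≤ k :=
  (totalDegree_add _ _).trans (max_le ((totalDegree_A ℓ ε).trans (Nat.sub_le _ _))
    (totalDegree_CM w ε))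

lemma totalDegree_Q (ℓ : Fin k → F) (w : F) : (Q ℓ w).totalDegree ≤ k * 2 ^ k := by
  rw [Q_def]
  refine (totalDegree_finset_prod _ _).trans ?_
  refine (Finset.sum_le_card_nsmul _ _ k fun ε _ => totalDegree_G ℓ w ε).trans ?_
  simp [Fintype.card_fun, mul_comm]

lemma coeff_Q_high (hk : 1 ≤ k) (ℓ : Fin k → F) (w : F) (d : Fin k →₀ ℕ)
    (hd : (d.sum fun _ n => n) = k * 2 ^ k) :
    (Q ℓ w).coeff d = (monomial (dstar k) ((-w) ^ (2 ^ k)) : MvPolynomial (Fin k) F).coeff d := by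
  have hG : (fun ε : Fin k → Bool => G ℓ w ε) = fun ε => A ℓ ε + C (cc w ε) * M :=
    funext fun ε => rfl
  rw [Q_def, hG, Finset.prod_add, MvPolynomial.coeff_sum]
  rw [Finset.sum_eq_single ∅]
  · rw [Finset.prod_empty, one_mul, Finset.sdiff_empty]
    have : (∏ ε : Fin k → Bool, (C (cc w ε) * M : MvPolynomial (Fin k) F))
        = monomial (dstar k) ((-w) ^ (2 ^ k)) := by
      simp only [cc]
      rw [Finset.prod_mul_distrib, Finset.prod_const, Finset.prod_const, Finset.card_univ,
        Fintype.card_fun, Fintype.card_bool, Fintype.card_fin,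
        M_pow _ (pow_ne_zero k two_ne_zero), ← map_pow, C_mul_monomial, mul_one]
      rfl
    rw [this]
  · intro t _ ht
    apply coeff_eq_zero_of_totalDegree_lt
    have hcard : t.card ≤ 2 ^ k := by
      simpa [Fintype.card_fun] using Finset.card_le_univ t
    have h1 : ((∏ ε ∈ t, A ℓ ε) * ∏ ε ∈ univ \ t, (C (cc w ε) * M)).totalDegree
        ≤ (k - 1) * t.card + k * (2 ^ k - t.card) := by
      refine (totalDegree_mul _ _).trans (Nat.add_le_add ?_ ?_)
      · refine (totalDegree_finset_prod _ _).trans ?_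
        refine (Finset.sum_le_card_nsmul _ _ (k - 1) fun ε _ => totalDegree_A ℓ ε).trans ?_
        simp [mul_comm]
      · refine (totalDegree_finset_prod _ _).trans ?_
        refine (Finset.sum_le_card_nsmul _ _ k fun ε _ => totalDegree_CM w ε).trans ?_
        rw [Finset.card_sdiff_of_subset (Finset.subset_univ t), Finset.card_univ, Fintype.card_fun,
          Fintype.card_bool, Fintype.card_fin, smul_eq_mul, mul_comm]
    refine lt_of_le_of_lt h1 ?_
    rw [show (∑ i ∈ d.support, d i) = (d.sum fun _ n => n) from rfl, hd]
    have htpos : 1 ≤ t.card := Finset.card_pos.2 (Finset.nonempty_iff_ne_empty.2 ht)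
    have e1 : (k - 1) * t.card = k * t.card - t.card := by
      rw [Nat.sub_mul, one_mul]
    have e2 : k * (2 ^ k - t.card) = k * 2 ^ k - k * t.card := Nat.mul_sub k _ _
    have h3 : t.card ≤ k * t.card := Nat.le_mul_of_pos_left _ (by omega)
    have h4 : k * t.card ≤ k * 2 ^ k := Nat.mul_le_mul_left k hcard
    omega
  · intro h
    exact absurd (Finset.empty_mem_powerset _) h

lemma dstar_sum : ((dstar k).sum fun _ n => n) = k * 2 ^ k := by
  rw [Finsupp.sum_fintype _ _ (fun _ => rfl)]
  simp [dstar_apply]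

lemma coeff_Q_dstar (hk : 1 ≤ k) (ℓ : Fin k → F) (w : F) :
    (Q ℓ w).coeff (dstar k) = (-w) ^ (2 ^ k) := by
  rw [coeff_Q_high hk ℓ w _ dstar_sum, coeff_monomial, if_pos rfl]

lemma sum_lt_of_ne_dstar (hk : 1 ≤ k) (ℓ : Fin k → F) (w : F) (d : Fin k →₀ ℕ)
    (hd : d ∈ (Q ℓ w).support) (hne : d ≠ dstar k) :
    (d.sum fun _ n => n) < k * 2 ^ k := by
  rcases lt_or_ge (d.sum fun _ n => n) (k * 2 ^ k) with h | h
  · exact h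
  · exfalso
    have hle : (d.sum fun _ n => n) ≤ k * 2 ^ k :=
      (le_totalDegree hd).trans (totalDegree_Q ℓ w)
    have heq : (d.sum fun _ n => n) = k * 2 ^ k := le_antisymm hle h
    have := coeff_Q_high hk ℓ w d heq
    rw [coeff_monomial, if_neg (fun hh => hne hh.symm)] at this
    exact MvPolynomial.mem_support_iff.1 hd this

noncomputable def T (τ : Fin k → F) (d : Fin k →₀ ℕ) : Polynomial F :=
  ∏ j, (Polynomial.X + Polynomial.C (τ j)) ^ (d j / 2)

noncomputable def P (ℓ τ : Fin k → F) (w : F) : Polynomial F :=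
  ∑ d ∈ (Q ℓ w).support, Polynomial.C ((Q ℓ w).coeff d) * T τ d

lemma T_monic (τ : Fin k → F) (d : Fin k →₀ ℕ) : (T τ d).Monic :=
  Polynomial.monic_prod_of_monic _ _ fun j _ => (Polynomial.monic_X_add_C _).pow _

lemma T_natDegree (τ : Fin k → F) (d : Fin k →₀ ℕ) :
    (T τ d).natDegree = ∑ j, d j / 2 := by
  rw [T, Polynomial.natDegree_prod _ _
    (fun j _ => ((Polynomial.monic_X_add_C _).pow _).ne_zero)]
  exact Finset.sum_congr rfl fun j _ => by
    rw [Polynomial.natDegree_pow, Polynomial.natDegree_X_add_C, mul_one]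

lemma pow_split (hk : 1 ≤ k) : 2 ^ k = 2 * 2 ^ (k - 1) := by
  conv_lhs => rw [show k = (k - 1) + 1 from by omega]
  rw [pow_succ]
  ring

lemma sum_div_le (h2 : (2 : F) ≠ 0) (hk : 1 ≤ k) (ℓ : Fin k → F) (w : F) (d : Fin k →₀ ℕ)
    (hd : d ∈ (Q ℓ w).support) : ∑ j, d j / 2 ≤ k * 2 ^ (k - 1) := by
  have hsum : ∑ j, d j ≤ k * 2 ^ k := by
    have := (le_totalDegree hd).trans (totalDegree_Q ℓ w)
    rwa [Finsupp.sum_fintype _ _ (fun _ => rfl)] at this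
  have h2sum : 2 * ∑ j, d j / 2 = ∑ j, d j := by
    rw [Finset.mul_sum]
    exact Finset.sum_congr rfl fun j _ => Nat.mul_div_cancel' (even_exp h2 hk ℓ w d hd j)
  have hpow := pow_split hk
  have : k * 2 ^ k = 2 * (k * 2 ^ (k - 1)) := by rw [hpow]; ring
  omega

lemma natDegree_P_le (h2 : (2 : F) ≠ 0) (hk : 1 ≤ k) (ℓ τ : Fin k → F) (w : F) :
    (P ℓ τ w).natDegree ≤ k * 2 ^ (k - 1) := by
  refine Polynomial.natDegree_sum_le_of_forall_le _ _ fun d hd => ?_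
  refine (Polynomial.natDegree_C_mul_le _ _).trans ?_
  rw [T_natDegree]
  exact sum_div_le h2 hk ℓ w d hd

lemma coeff_P (h2 : (2 : F) ≠ 0) (hk : 1 ≤ k) (ℓ τ : Fin k → F) {w : F} (hw : w ≠ 0) :
    (P ℓ τ w).coeff (k * 2 ^ (k - 1)) = (-w) ^ (2 ^ k) := by
  have hds : dstar k ∈ (Q ℓ w).support :=
    MvPolynomial.mem_support_iff.2 (by
      rw [coeff_Q_dstar hk]
      exact pow_ne_zero _ (neg_ne_zero.2 hw))
  rw [P, Polynomial.finset_sum_coeff, Finset.sum_eq_single (dstar k)]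
  · rw [Polynomial.coeff_C_mul, coeff_Q_dstar hk]
    have hdeg : (T τ (dstar k)).natDegree = k * 2 ^ (k - 1) := by
      rw [T_natDegree]
      have hj : ∀ j : Fin k, dstar k j / 2 = 2 ^ (k - 1) := fun j => by
        rw [dstar_apply, pow_split hk, Nat.mul_div_cancel_left _ (by norm_num)]
      rw [Finset.sum_congr rfl fun j _ => hj j, Finset.sum_const, Finset.card_univ,
        Fintype.card_fin, smul_eq_mul]
    rw [← hdeg, (T_monic τ _).coeff_natDegree, mul_one]
  · intro d hd hne
    apply Polynomial.coeff_eq_zero_of_natDegree_lt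
    refine lt_of_le_of_lt ((Polynomial.natDegree_C_mul_le _ _).trans
      (le_of_eq (T_natDegree τ d))) ?_
    have hlt : ∑ j, d j < k * 2 ^ k := by
      have := sum_lt_of_ne_dstar hk ℓ w d hd hne
      rwa [Finsupp.sum_fintype _ _ (fun _ => rfl)] at this
    have h2sum : 2 * ∑ j, d j / 2 = ∑ j, d j := by
      rw [Finset.mul_sum]
      exact Finset.sum_congr rfl fun j _ => Nat.mul_div_cancel' (even_exp h2 hk ℓ w d hd j)
    have : k * 2 ^ k = 2 * (k * 2 ^ (k - 1)) := by rw [pow_split hk]; ring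
    omega
  · intro h
    exact absurd hds h

lemma P_ne_zero (h2 : (2 : F) ≠ 0) (hk : 1 ≤ k) (ℓ τ : Fin k → F) {w : F} (hw : w ≠ 0) :
    P ℓ τ w ≠ 0 := fun h0 => by
  have := coeff_P h2 hk ℓ τ hw
  rw [h0, Polynomial.coeff_zero] at this
  exact pow_ne_zero _ (neg_ne_zero.2 hw) this.symm

lemma eval_P (h2 : (2 : F) ≠ 0) (hk : 1 ≤ k) (ℓ τ : Fin k → F) (w : F) (z : F)
    (s : Fin k → F) (hs : ∀ i, s i ^ 2 = z + τ i) :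
    (P ℓ τ w).eval z = MvPolynomial.eval s (Q ℓ w) := by
  rw [P, Polynomial.eval_finset_sum]
  conv_rhs => rw [← support_sum_monomial_coeff (Q ℓ w), map_sum]
  refine Finset.sum_congr rfl fun d hd => ?_
  rw [Polynomial.eval_mul, Polynomial.eval_C, eval_monomial]
  congr 1
  rw [Finsupp.prod_fintype _ _ (fun _ => pow_zero _), T, Polynomial.eval_prod]
  refine Finset.prod_congr rfl fun j _ => ?_
  obtain ⟨m, hm⟩ := even_exp h2 hk ℓ w d hd j
  rw [hm, Nat.mul_div_cancel_left _ (by norm_num), Polynomial.eval_pow, Polynomial.eval_add,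
    Polynomial.eval_X, Polynomial.eval_C, pow_mul, hs j]

lemma eval_Q_zero (ℓ : Fin k → F) (w : F) (s : Fin k → F) (hs0 : ∀ i, s i ≠ 0)
    (hsum : ∑ i, ℓ i * (s i)⁻¹ = w) : MvPolynomial.eval s (Q ℓ w) = 0 := by
  rw [Q_def, map_prod]
  apply Finset.prod_eq_zero (Finset.mem_univ (fun _ => true))
  simp only [G, A, M, cc, sgn, if_true, mul_one, map_add, map_sum, map_mul, eval_C, map_prod,
    eval_X]
  have key : ∀ i : Fin k, ℓ i * ∏ j ∈ univ.erase i, s j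
      = ℓ i * (s i)⁻¹ * ∏ j, s j := by
    intro i
    rw [← Finset.mul_prod_erase univ s (mem_univ i)]
    rw [← mul_assoc, mul_assoc (ℓ i), inv_mul_cancel₀ (hs0 i), mul_one]
  rw [Finset.sum_congr rfl (fun i _ => key i), ← Finset.sum_mul, hsum]
  ring

end Stmt17

theorem stmt_17 (p k : ℕ) [Fact p.Prime] (hk : 1 ≤ k)
    (ℓ : Fin k → ℤ) (hℓ : ∀ i, |ℓ i| < p) (hℓ0 : ¬ ∀ i, (p : ℤ) ∣ ℓ i)
    (τ : Fin k → ZMod p) (hτ : Function.Injective τ)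
    (w : ZMod p) (hw : w ≠ 0) :
    ({b : Fin k → ℕ |
        (∀ i, b i ∈ Finset.Icc 1 ((p - 1) / 2)) ∧
        (∀ i j, ((b i : ZMod p)) ^ 2 - τ i = ((b j : ZMod p)) ^ 2 - τ j) ∧
        (∀ i, ((b i : ZMod p)) ^ 2 - τ i ≠ 0) ∧
        (∑ i, (ℓ i : ZMod p) * ((b i : ZMod p))⁻¹) = w} :
      Set (Fin k → ℕ)).ncard ≤ k * 2 ^ (k - 1) := by
  classical
  by_cases hp2 : p = 2
  · subst hp2
    have he : ({b : Fin k → ℕ |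
        (∀ i, b i ∈ Finset.Icc 1 ((2 - 1) / 2)) ∧
        (∀ i j, ((b i : ZMod 2)) ^ 2 - τ i = ((b j : ZMod 2)) ^ 2 - τ j) ∧
        (∀ i, ((b i : ZMod 2)) ^ 2 - τ i ≠ 0) ∧
        (∑ i, (ℓ i : ZMod 2) * ((b i : ZMod 2))⁻¹) = w} : Set (Fin k → ℕ)) = ∅ := by
      ext b
      simp only [Set.mem_setOf_eq, Set.mem_empty_iff_false, iff_false, not_and]
      intro h1
      exfalso
      have := Finset.mem_Icc.1 (h1 ⟨0, hk⟩)
      omega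
    rw [he, Set.ncard_empty]
    exact Nat.zero_le _
  · have hp := Fact.out (p := p.Prime)
    haveI : NeZero p := ⟨hp.pos.ne'⟩
    have hp3 : 3 ≤ p := by have := hp.two_le; omega
    have h2 : (2 : ZMod p) ≠ 0 := by
      intro h
      have h' : ((2 : ℕ) : ZMod p) = 0 := by push_cast; exact h
      have hd := (ZMod.natCast_eq_zero_iff 2 p).1 h'
      have := Nat.le_of_dvd (by norm_num) hd
      omega
    set ℓF : Fin k → ZMod p := fun i => (ℓ i : ZMod p) with hℓF
    set Pp := Stmt17.P ℓF τ w with hPp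
    have hPne := Stmt17.P_ne_zero h2 hk ℓF τ hw
    have hPdeg := Stmt17.natDegree_P_le h2 hk ℓF τ w
    set i₀ : Fin k := ⟨0, hk⟩ with hi₀
    have hnz : ∀ b : Fin k → ℕ, (∀ i, b i ∈ Finset.Icc 1 ((p - 1) / 2)) →
        ∀ i, (b i : ZMod p) ≠ 0 := by
      intro b h1 i hb0
      have hb := Finset.mem_Icc.1 (h1 i)
      have hd := (ZMod.natCast_eq_zero_iff _ p).1 hb0
      have := Nat.le_of_dvd (by omega) hd
      omega
    refine le_trans (Set.ncard_le_ncard_of_injOn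
      (fun b => ((b i₀ : ZMod p)) ^ 2 - τ i₀) ?_ ?_ (Pp.roots.toFinset).finite_toSet) ?_
    · rintro b ⟨h1, hEq, hne0, hsum⟩
      rw [Finset.mem_coe, Multiset.mem_toFinset, Polynomial.mem_roots hPne]
      have hs : ∀ i, ((b i : ZMod p)) ^ 2 = (((b i₀ : ZMod p)) ^ 2 - τ i₀) + τ i := by
        intro i
        linear_combination hEq i i₀
      show Pp.IsRoot _
      rw [Polynomial.IsRoot, hPp, Stmt17.eval_P h2 hk ℓF τ w _ _ hs]
      exact Stmt17.eval_Q_zero ℓF w _ (hnz b h1) hsum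
    · rintro b ⟨hb1, hbEq, -, -⟩ b' ⟨hb'1, hb'Eq, -, -⟩ hzz
      simp only at hzz
      funext i
      have hsq : ((b i : ZMod p)) ^ 2 = ((b' i : ZMod p)) ^ 2 := by
        linear_combination hbEq i i₀ - hb'Eq i i₀ + hzz
      have hfac : (((b i : ZMod p)) - (b' i : ZMod p)) * (((b i : ZMod p)) + (b' i : ZMod p))
          = 0 := by linear_combination hsq
      have hb := Finset.mem_Icc.1 (hb1 i)
      have hb' := Finset.mem_Icc.1 (hb'1 i)
      rcases mul_eq_zero.1 hfac with hc | hc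
      · have hbe : (b i : ZMod p) = (b' i : ZMod p) := sub_eq_zero.1 hc
        have l1 : b i < p := by omega
        have l2 : b' i < p := by omega
        calc b i = ((b i : ℕ) : ZMod p).val := (ZMod.val_cast_of_lt l1).symm
          _ = ((b' i : ℕ) : ZMod p).val := by rw [hbe]
          _ = b' i := ZMod.val_cast_of_lt l2
      · exfalso
        have hc' : ((b i + b' i : ℕ) : ZMod p) = 0 := by push_cast; linear_combination hc
        have hdvd := (ZMod.natCast_eq_zero_iff _ p).1 hc'
        have := Nat.le_of_dvd (by omega) hdvd
        omega
    · rw [Set.ncard_coe_finset]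
      exact le_trans (Multiset.toFinset_card_le _) (le_trans Pp.card_roots' hPdeg)
end
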